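/- Let M be the Gram matrix of permutation operators, M_{π,σ} = D^{l(π^{-1}σ)} where l counts cycles, indexed by permutations π, σ ∈ S_n with n fixed. Then the diagonal entries equal D^n, all off-diagonal entries are at most D^{n-1}, and for D sufficiently large M is invertible with M^{-1} = D^{-n}·I + E where every entry of E has magnitude O(D^{-n-1}). -/

import Mathlib

/-!
Dividing by `D^n`, the Gram matrix becomes `1 + N`, where `N` vanishes on the diagonal and its
off-diagonal entries are at most `1/D`, because a nontrivial permutation of `n` points has fewer
than `n` cycles. In the `ℓ∞`-operator norm `‖N‖ ≤ n!/D ≤ 1/2` once `D ≥ 2 n!`, and then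
`(1 + N)⁻¹ - 1 = -(1 + N)⁻¹ N` has norm at most `2‖N‖`, which bounds its entries by `2 n!/D`.
-/

open Finset

/-- The number of cycles (including fixed points) of a permutation of `n` elements. -/
def numCycles {n : ℕ} (σ : Equiv.Perm (Fin n)) : ℕ :=
  Multiset.card σ.cycleType + (n - σ.cycleType.sum)

section NormedRing

variable {R : Type*} [NormedRing R] [HasSummableGeomSeries R]

theorem isUnit_one_add_of_norm_lt_one {x : R} (hx : ‖x‖ < 1) : IsUnit (1 + x) := by
  simpa using isUnit_one_sub_of_norm_lt_one (x := -x) (by rwa [norm_neg])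

theorem norm_inverse_one_add_sub_one_le [NormOneClass R] {x : R} (hx : ‖x‖ ≤ 1 / 2) :
    ‖Ring.inverse (1 + x) - 1‖ ≤ 2 * ‖x‖ := by
  set y := Ring.inverse (1 + x)
  have hy : y - 1 = -(y * x) := by
    have h := Ring.inverse_mul_cancel _ (isUnit_one_add_of_norm_lt_one (by linarith))
    rw [mul_add, mul_one] at h
    rw [← h]; abel
  have hyx : ‖y - 1‖ ≤ ‖y‖ * ‖x‖ := by
    rw [hy, norm_neg]; exact norm_mul_le _ _
  -- `‖y‖ ≤ 1 + ‖y‖ / 2` by the triangle inequality, so `‖y‖ ≤ 2`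
  have hy2 : ‖y‖ ≤ 2 := by
    have := norm_sub_norm_le y 1
    rw [norm_one] at this
    nlinarith [norm_nonneg y]
  calc ‖y - 1‖ ≤ ‖y‖ * ‖x‖ := hyx
    _ ≤ 2 * ‖x‖ := mul_le_mul_of_nonneg_right hy2 (norm_nonneg x)

end NormedRing

namespace Matrix

section LinftyOpNorm

attribute [local instance] Matrix.linftyOpSeminormedAddCommGroup Matrix.linftyOpNormedAddCommGroup
  Matrix.linftyOpNormedRing Matrix.linftyOpNormedSpace

variable {m n : Type*} [Fintype m] [Fintype n]

theorem norm_apply_le_linfty_opNorm {α : Type*} [SeminormedAddCommGroup α] (A : Matrix m n α)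
    (i : m) (j : n) : ‖A i j‖ ≤ ‖A‖ := by
  have h : ‖A i j‖₊ ≤ ‖A‖₊ := by
    rw [linfty_opNNNorm_def]
    exact (single_le_sum (f := fun j => ‖A i j‖₊) (fun _ _ => zero_le) (mem_univ j)).trans
      (le_sup (f := fun i => ∑ j, ‖A i j‖₊) (mem_univ i))
  exact_mod_cast h

theorem linfty_opNorm_le_card_mul {α : Type*} [SeminormedAddCommGroup α] (A : Matrix m n α)
    {c : ℝ} (hc : 0 ≤ c) (h : ∀ i j, ‖A i j‖ ≤ c) : ‖A‖ ≤ Fintype.card n * c := by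
  rw [linfty_opNorm_def, ← NNReal.coe_natCast, ← Real.coe_toNNReal c hc, ← NNReal.coe_mul,
    NNReal.coe_le_coe]
  refine Finset.sup_le fun i _ => ?_
  calc ∑ j, ‖A i j‖₊ ≤ ∑ _j : n, c.toNNReal :=
        sum_le_sum fun j _ => by
          rw [← NNReal.coe_le_coe, coe_nnnorm, Real.coe_toNNReal c hc]; exact h i j
    _ = Fintype.card n * c.toNNReal := by simp

theorem isUnit_and_norm_inv_sub_one_apply_le {𝕜 : Type*} [NontriviallyNormedField 𝕜]
    [CompleteSpace 𝕜] [DecidableEq n] [Nonempty n] {A : Matrix n n 𝕜} {ε : ℝ} (hε : 0 ≤ ε)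
    (hA : ∀ i j, ‖(A - 1) i j‖ ≤ ε) (hsmall : 2 * Fintype.card n * ε ≤ 1) :
    IsUnit A ∧ ∀ i j, ‖(A⁻¹ - 1) i j‖ ≤ 2 * Fintype.card n * ε := by
  -- `FiniteDimensional.complete` is about the product uniformity, which is the `ℓ∞`-norm one only
  -- up to unfolding, so instance search cannot combine the two
  have : HasSummableGeomSeries (Matrix n n 𝕜) :=
    @instHasSummableGeomSeriesOfCompleteSpace _ _ (FiniteDimensional.complete 𝕜 (Matrix n n 𝕜))
  have hnorm : ‖A - 1‖ ≤ Fintype.card n * ε := linfty_opNorm_le_card_mul _ hε hA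
  have hA1 : A = 1 + (A - 1) := by abel
  refine ⟨hA1 ▸ isUnit_one_add_of_norm_lt_one (by linarith), fun i j => ?_⟩
  calc ‖(A⁻¹ - 1) i j‖ ≤ ‖Ring.inverse (1 + (A - 1)) - 1‖ := by
        rw [← hA1, ← nonsing_inv_eq_ringInverse]; exact norm_apply_le_linfty_opNorm _ i j
    _ ≤ 2 * ‖A - 1‖ := norm_inverse_one_add_sub_one_le (by linarith)
    _ ≤ 2 * Fintype.card n * ε := by linarith

theorem isUnit_and_norm_inv_sub_inv_smul_one_apply_le {𝕜 : Type*} [NontriviallyNormedField 𝕜]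
    [CompleteSpace 𝕜] [DecidableEq n] [Nonempty n] {M : Matrix n n 𝕜} {c : 𝕜} (hc : c ≠ 0)
    {ε : ℝ} (hε : 0 ≤ ε) (hM : ∀ i j, ‖(c⁻¹ • M - 1) i j‖ ≤ ε)
    (hsmall : 2 * Fintype.card n * ε ≤ 1) :
    IsUnit M ∧ ∀ i j, ‖(M⁻¹ - c⁻¹ • 1) i j‖ ≤ ‖c‖⁻¹ * (2 * Fintype.card n * ε) := by
  obtain ⟨hA, hAinv⟩ := isUnit_and_norm_inv_sub_one_apply_le hε hM hsmall
  have hMA : M = Units.mk0 c hc • (c⁻¹ • M) := by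
    simp [Units.smul_def, smul_smul, mul_inv_cancel₀ hc]
  have hinv : M⁻¹ - c⁻¹ • 1 = c⁻¹ • ((c⁻¹ • M)⁻¹ - 1) := by
    conv_lhs => rw [hMA, inv_smul' _ _ ((isUnit_iff_isUnit_det _).1 hA)]
    rw [smul_sub]; rfl
  refine ⟨hMA ▸ (isUnit_smul_iff _ _).2 hA, fun i j => ?_⟩
  rw [hinv, smul_apply, smul_eq_mul, norm_mul, norm_inv]
  exact mul_le_mul_of_nonneg_left (hAinv i j) (by positivity)

end LinftyOpNorm

end Matrix

open Equiv

-- every nontrivial cycle has length at least 2, and a nontrivial permutation has one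
theorem numCycles_lt {n : ℕ} {σ : Perm (Fin n)} (h : σ ≠ 1) : numCycles σ < n := by
  have hsum : σ.cycleType.sum ≤ n := by simpa using σ.sum_cycleType_le
  have htwo : Multiset.card σ.cycleType • 2 ≤ σ.cycleType.sum :=
    Multiset.card_nsmul_le_sum fun _ => Perm.two_le_of_mem_cycleType
  have hpos : 0 < Multiset.card σ.cycleType := Perm.card_cycleType_pos.2 h
  rw [smul_eq_mul] at htwo
  unfold numCycles
  omega

def permGram (n : ℕ) (D : ℝ) : Matrix (Perm (Fin n)) (Perm (Fin n)) ℝ :=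
  fun π σ => D ^ numCycles (π⁻¹ * σ)

section permGram

variable {n : ℕ} {D : ℝ}

theorem permGram_apply_self (π : Perm (Fin n)) : permGram n D π π = D ^ n := by
  simp [permGram, numCycles]

theorem permGram_apply_le (hD : 1 ≤ D) {π σ : Perm (Fin n)} (h : π ≠ σ) :
    permGram n D π σ ≤ D ^ (n - 1) := by
  have := numCycles_lt (mt inv_mul_eq_one.1 h)
  exact pow_le_pow_right₀ hD (by omega)

theorem abs_inv_pow_smul_permGram_sub_one_apply_le (hD : 1 ≤ D) (π σ : Perm (Fin n)) :
    |((D ^ n)⁻¹ • permGram n D - 1) π σ| ≤ D⁻¹ := by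
  have hD0 : 0 < D := by linarith
  by_cases h : π = σ
  · subst h
    simp [permGram_apply_self, hD0.ne', hD0.le]
  · have hlt := numCycles_lt (mt inv_mul_eq_one.1 h)
    have hpow : D ^ numCycles (π⁻¹ * σ) * D ≤ D ^ n := by
      rw [← pow_succ]; exact pow_le_pow_right₀ hD hlt
    simp only [Matrix.sub_apply, Matrix.smul_apply, Matrix.one_apply_ne h, smul_eq_mul, sub_zero,
      permGram]
    rw [abs_of_nonneg (by positivity), inv_mul_le_iff₀ (by positivity), ← div_eq_mul_inv,
      le_div_iff₀ hD0]
    exact hpow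

end permGram

theorem stmt_12_general (n : ℕ) :
    ∃ C : ℝ, 0 < C ∧ ∃ D₀ : ℕ, ∀ D : ℕ, D₀ ≤ D →
      ∀ M : Matrix (Equiv.Perm (Fin n)) (Equiv.Perm (Fin n)) ℝ,
        (M = fun π σ => (D : ℝ) ^ (numCycles (π⁻¹ * σ))) →
        (∀ π, M π π = (D : ℝ) ^ n) ∧
        (∀ π σ, π ≠ σ → M π σ ≤ (D : ℝ) ^ (n - 1)) ∧
        IsUnit M ∧
        (∀ π σ, |M⁻¹ π σ - (if π = σ then ((D : ℝ) ^ n)⁻¹ else 0)|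
            ≤ C / (D : ℝ) ^ (n + 1)) := by
  set k := Fintype.card (Perm (Fin n))
  have hk : 0 < k := Fintype.card_pos
  refine ⟨2 * k, by positivity, 2 * k, fun D hD M hM => ?_⟩
  change M = permGram n D at hM
  subst hM
  have hD1 : (1 : ℝ) ≤ D := by exact_mod_cast (by omega : 1 ≤ D)
  have hDn : (D : ℝ) ^ n ≠ 0 := by positivity
  obtain ⟨hM, hMinv⟩ := Matrix.isUnit_and_norm_inv_sub_inv_smul_one_apply_le hDn
    (ε := (D : ℝ)⁻¹) (by positivity)
    (fun π σ => (Real.norm_eq_abs _).trans_le (abs_inv_pow_smul_permGram_sub_one_apply_le hD1 π σ))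
    (by rw [mul_inv_le_iff₀ (by positivity), one_mul]; exact_mod_cast hD)
  refine ⟨permGram_apply_self, fun _ _ => permGram_apply_le hD1, hM, fun π σ => ?_⟩
  calc _ = ‖((permGram n D)⁻¹ - ((D : ℝ) ^ n)⁻¹ • 1) π σ‖ := by
        simp [Real.norm_eq_abs, Matrix.one_apply]
    _ ≤ ‖(D : ℝ) ^ n‖⁻¹ * (2 * k * (D : ℝ)⁻¹) := hMinv π σ
    _ = 2 * k / (D : ℝ) ^ (n + 1) := by
        rw [Real.norm_of_nonneg (by positivity)]; field_simp; ring

/-- The Gram matrix `M_{π,σ} = D^{l(π⁻¹σ)}` of the permutation operators on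
`(ℂ^D)^{⊗n}` has diagonal entries `D^n`, off-diagonal entries at most `D^{n-1}`,
and for `D` large enough it is invertible with `M⁻¹ = D^{-n}·I + E`, where every
entry of `E` has magnitude `O(D^{-n-1})`. -/
theorem stmt_12 (n : ℕ) (hn : 1 ≤ n) :
    ∃ C : ℝ, 0 < C ∧ ∃ D₀ : ℕ, ∀ D : ℕ, D₀ ≤ D →
      ∀ M : Matrix (Equiv.Perm (Fin n)) (Equiv.Perm (Fin n)) ℝ,
        (M = fun π σ => (D : ℝ) ^ (numCycles (π⁻¹ * σ))) →
        (∀ π, M π π = (D : ℝ) ^ n) ∧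
        (∀ π σ, π ≠ σ → M π σ ≤ (D : ℝ) ^ (n - 1)) ∧
        IsUnit M ∧
        (∀ π σ, |M⁻¹ π σ - (if π = σ then ((D : ℝ) ^ n)⁻¹ else 0)|
            ≤ C / (D : ℝ) ^ (n + 1)) :=
  stmt_12_general n
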